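/- Let p be a prime, e ≥ 1, and 0 ≤ k ≤ n. Let B ∈ Sym_n(𝔽_p) have corank k (i.e. rank n − k). Then for every m ≥ 0 and every H' ∈ Sym_m(ℤ/p^eℤ): the proportion, among all H ∈ Sym_n(ℤ/p^eℤ) whose reduction mod p equals B, of those H with Cok_*^{(p^e)}(H) ≃ Cok_*^{(p^e)}(H'), equals the proportion, among all H_k ∈ Sym_k(ℤ/p^eℤ) whose entries all lie in pℤ/p^eℤ, of those H_k with Cok_*^{(p^e)}(H_k) ≃ Cok_*^{(p^e)}(H'). -/

import Mathlib

open Matrix MeasureTheory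

/-- Congruence of square matrices over `R`: `B = U * A * Uᵀ` for some `U ∈ GL`. -/
def Matrix.Congruent {R : Type*} [CommRing R] {ι : Type*} [Fintype ι] [DecidableEq ι]
    (A B : Matrix ι ι R) : Prop :=
  ∃ U : (Matrix ι ι R)ˣ, (U : Matrix ι ι R) * A * (U : Matrix ι ι R)ᵀ = B

/-- Congruence of square matrices indexed by two (necessarily equipotent) index types. -/
def Matrix.CongruentTo {R : Type*} [CommRing R] {ι κ : Type*} [Fintype ι] [DecidableEq ι]
    [Fintype κ] [DecidableEq κ] (A : Matrix ι ι R) (B : Matrix κ κ R) : Prop :=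
  ∃ e : ι ≃ κ, (A.submatrix e.symm e.symm).Congruent B


/-- Isomorphism of cokernels with quasi-pairing: `Cok_*(H₁) ≃ Cok_*(H₂)` iff after adjoining
invertible symmetric blocks, the two block-diagonal matrices become congruent. -/
def QuasiPairedIso {q : ℕ} {ι κ : Type*} [Fintype ι] [DecidableEq ι] [Fintype κ] [DecidableEq κ]
    (H₁ : Matrix ι ι (ZMod q)) (H₂ : Matrix κ κ (ZMod q)) : Prop :=
  ∃ (k₁ k₂ : ℕ) (C₁ : Matrix (Fin k₁) (Fin k₁) (ZMod q)) (C₂ : Matrix (Fin k₂) (Fin k₂) (ZMod q)),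
    C₁.IsSymm ∧ IsUnit C₁.det ∧ C₂.IsSymm ∧ IsUnit C₂.det ∧
    (Matrix.fromBlocks C₁ 0 0 H₁).CongruentTo (Matrix.fromBlocks C₂ 0 0 H₂)

/-!
Reduction `π : ℤ/p^e → 𝔽_p` is a local homomorphism, so a matrix over `ℤ/p^e` is invertible
iff its reduction is. Over `𝔽_p`, the symmetric matrix `B` is congruent to `diag(B₁, 0)` with
`B₁` invertible of size `n - k`; lifting that congruence, the symmetric lifts of `B` correspond to
those of `diag(B₁, 0)`. Such a lift `[[A, C], [Cᵀ, D]]` has `A` invertible, and it is congruent to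
`diag(A, K)` for the Schur complement `K = D - Cᵀ A⁻¹ C`, a symmetric matrix with entries in
`pℤ/p^eℤ`. The map to `((A, C), K)` is a bijection onto a product, and adjoining the invertible
symmetric block `A` does not change `Cok_*`. So, class by class, the lifts of `B` are the matrices
`K` counted `#{(A, C)}` times, and that factor cancels in the proportion.
-/

namespace Matrix

variable {R : Type*} [CommRing R] {ι κ μ : Type*} [Fintype ι] [DecidableEq ι] [Fintype κ]
  [DecidableEq κ] [Fintype μ] [DecidableEq μ]

def congruenceEquiv (U : (Matrix ι ι R)ˣ) : Matrix ι ι R ≃ Matrix ι ι R where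
  toFun H := U * H * (U : Matrix ι ι R)ᵀ
  invFun H := ↑U⁻¹ * H * (↑U⁻¹ : Matrix ι ι R)ᵀ
  left_inv H := by
    dsimp only
    rw [← Matrix.mul_assoc, ← Matrix.mul_assoc, Units.inv_mul, Matrix.one_mul, Matrix.mul_assoc,
      ← transpose_mul, Units.inv_mul, transpose_one, Matrix.mul_one]
  right_inv H := by
    dsimp only
    rw [← Matrix.mul_assoc, ← Matrix.mul_assoc, Units.mul_inv, Matrix.one_mul, Matrix.mul_assoc,
      ← transpose_mul, Units.mul_inv, transpose_one, Matrix.mul_one]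

theorem congruenceEquiv_apply (U : (Matrix ι ι R)ˣ) (H : Matrix ι ι R) :
    congruenceEquiv U H = U * H * (U : Matrix ι ι R)ᵀ := rfl

theorem congruenceEquiv_transpose (U : (Matrix ι ι R)ˣ) (H : Matrix ι ι R) :
    (congruenceEquiv U H)ᵀ = congruenceEquiv U Hᵀ := by
  rw [congruenceEquiv_apply, congruenceEquiv_apply, transpose_mul, transpose_mul,
    transpose_transpose, Matrix.mul_assoc]

theorem Congruent.symm {A B : Matrix ι ι R} (h : A.Congruent B) : B.Congruent A := by
  obtain ⟨U, rfl⟩ := h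
  exact ⟨U⁻¹, (congruenceEquiv U).symm_apply_apply A⟩

theorem Congruent.trans {A B C : Matrix ι ι R} (h₁ : A.Congruent B) (h₂ : B.Congruent C) :
    A.Congruent C := by
  obtain ⟨U, rfl⟩ := h₁
  obtain ⟨V, rfl⟩ := h₂
  exact ⟨V * U, by simp [Matrix.mul_assoc]⟩

theorem Congruent.submatrix {A B : Matrix ι ι R} (h : A.Congruent B) (e : κ ≃ ι) :
    (A.submatrix e e).Congruent (B.submatrix e e) := by
  obtain ⟨U, rfl⟩ := h
  refine ⟨Units.map (reindexAlgEquiv R R e.symm).toMonoidHom U, ?_⟩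
  simp [transpose_submatrix, submatrix_mul_equiv]

theorem Congruent.congruentTo {A B : Matrix ι ι R} (h : A.Congruent B) : A.CongruentTo B :=
  ⟨Equiv.refl ι, by simpa using h⟩

theorem CongruentTo.of_submatrix_eq {A : Matrix ι ι R} {B : Matrix κ κ R} (e : ι ≃ κ)
    (h : A.submatrix e.symm e.symm = B) : A.CongruentTo B :=
  ⟨e, by rw [h]; exact ⟨1, by simp⟩⟩

theorem CongruentTo.refl (A : Matrix ι ι R) : A.CongruentTo A :=
  .of_submatrix_eq (Equiv.refl ι) rfl

theorem CongruentTo.symm {A : Matrix ι ι R} {B : Matrix κ κ R} (h : A.CongruentTo B) :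
    B.CongruentTo A := by
  obtain ⟨e, h⟩ := h
  refine ⟨e.symm, ?_⟩
  simpa using (h.submatrix e).symm

theorem CongruentTo.trans {A : Matrix ι ι R} {B : Matrix κ κ R} {C : Matrix μ μ R}
    (h₁ : A.CongruentTo B) (h₂ : B.CongruentTo C) : A.CongruentTo C := by
  obtain ⟨e₁, h₁⟩ := h₁
  obtain ⟨e₂, h₂⟩ := h₂
  exact ⟨e₁.trans e₂, by simpa using (h₁.submatrix e₂.symm).trans h₂⟩

theorem CongruentTo.fromBlocks {ι' κ' : Type*} [Fintype ι'] [DecidableEq ι'] [Fintype κ']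
    [DecidableEq κ'] {A : Matrix ι ι R} {A' : Matrix ι' ι' R} {D : Matrix κ κ R}
    {D' : Matrix κ' κ' R} (hA : A.CongruentTo A') (hD : D.CongruentTo D') :
    (fromBlocks A 0 0 D).CongruentTo (fromBlocks A' 0 0 D') := by
  obtain ⟨e₁, U₁, rfl⟩ := hA
  obtain ⟨e₂, U₂, rfl⟩ := hD
  have hU : IsUnit (Matrix.fromBlocks (U₁ : Matrix ι' ι' R) 0 0 (U₂ : Matrix κ' κ' R)) := by
    simp [isUnit_iff_isUnit_det, det_fromBlocks_zero₂₁, (isUnit_iff_isUnit_det _).mp U₁.isUnit,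
      (isUnit_iff_isUnit_det _).mp U₂.isUnit]
  have hsub : (Matrix.fromBlocks A 0 0 D).submatrix (e₁.symm.sumCongr e₂.symm)
      (e₁.symm.sumCongr e₂.symm)
      = Matrix.fromBlocks (A.submatrix e₁.symm e₁.symm) 0 0 (D.submatrix e₂.symm e₂.symm) := by
    ext (i | i) (j | j) <;> rfl
  refine ⟨e₁.sumCongr e₂, hU.unit, ?_⟩
  rw [IsUnit.unit_spec, Equiv.sumCongr_symm, hsub, fromBlocks_transpose, fromBlocks_multiply,
    fromBlocks_multiply]
  simp

theorem congruentTo_fromBlocks_assoc (A : Matrix ι ι R) (D : Matrix κ κ R) (E : Matrix μ μ R) :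
    (fromBlocks (fromBlocks A 0 0 D) 0 0 E).CongruentTo
      (fromBlocks A 0 0 (fromBlocks D 0 0 E)) :=
  .of_submatrix_eq (Equiv.sumAssoc ι κ μ) <| by ext (i | i | i) (j | j | j) <;> rfl

theorem congruentTo_fromBlocks_left_comm (A : Matrix ι ι R) (D : Matrix κ κ R)
    (E : Matrix μ μ R) :
    (fromBlocks A 0 0 (fromBlocks D 0 0 E)).CongruentTo
      (fromBlocks D 0 0 (fromBlocks A 0 0 E)) :=
  .of_submatrix_eq ((Equiv.sumAssoc ι κ μ).symm.trans
      (((Equiv.sumComm ι κ).sumCongr (Equiv.refl μ)).trans (Equiv.sumAssoc κ ι μ))) <| by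
    ext (i | i | i) (j | j | j) <;> rfl

end Matrix

section QuasiPairedIso

variable {q : ℕ} {ι κ μ : Type*} [Fintype ι] [DecidableEq ι] [Fintype κ] [DecidableEq κ]
  [Fintype μ] [DecidableEq μ]

theorem QuasiPairedIso.of_congruentTo {α β : Type*} [Fintype α] [DecidableEq α] [Fintype β]
    [DecidableEq β] {H₁ : Matrix ι ι (ZMod q)} {H₂ : Matrix κ κ (ZMod q)}
    {C₁ : Matrix α α (ZMod q)} {C₂ : Matrix β β (ZMod q)} (hC₁ : C₁.IsSymm)
    (hC₁' : IsUnit C₁.det) (hC₂ : C₂.IsSymm) (hC₂' : IsUnit C₂.det)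
    (h : (fromBlocks C₁ 0 0 H₁).CongruentTo (fromBlocks C₂ 0 0 H₂)) : QuasiPairedIso H₁ H₂ := by
  let e₁ := Fintype.equivFin α
  let e₂ := Fintype.equivFin β
  refine ⟨_, _, C₁.submatrix e₁.symm e₁.symm, C₂.submatrix e₂.symm e₂.symm, hC₁.submatrix _,
    by simpa using hC₁', hC₂.submatrix _, by simpa using hC₂', ?_⟩
  exact (((CongruentTo.of_submatrix_eq e₁ rfl).fromBlocks (.refl H₁)).symm.trans h).trans
    ((CongruentTo.of_submatrix_eq e₂ rfl).fromBlocks (.refl H₂))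

theorem quasiPairedIso_fromBlocks_iff {A : Matrix ι ι (ZMod q)} (hA : A.IsSymm)
    (hA' : IsUnit A.det) (K : Matrix κ κ (ZMod q)) (H' : Matrix μ μ (ZMod q)) :
    QuasiPairedIso (fromBlocks A 0 0 K) H' ↔ QuasiPairedIso K H' := by
  constructor <;> rintro ⟨k₁, k₂, C₁, C₂, hC₁, hC₁', hC₂, hC₂', h⟩
  · refine .of_congruentTo (hC₁.fromBlocks (by simp) hA) ?_ hC₂ hC₂'
      ((congruentTo_fromBlocks_assoc C₁ A K).trans h)
    simp [det_fromBlocks_zero₂₁, hC₁', hA']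
  · refine .of_congruentTo hC₁ hC₁' (hA.fromBlocks (by simp) hC₂) ?_
      ((congruentTo_fromBlocks_left_comm C₁ A K).trans
        (((CongruentTo.refl A).fromBlocks h).trans (congruentTo_fromBlocks_assoc A C₂ H').symm))
    simp [det_fromBlocks_zero₂₁, hC₂', hA']

theorem quasiPairedIso_iff_of_congruentTo_fromBlocks {H : Matrix ι ι (ZMod q)}
    {A : Matrix κ κ (ZMod q)} {K : Matrix μ μ (ZMod q)} (hA : A.IsSymm) (hA' : IsUnit A.det)
    (h : H.CongruentTo (fromBlocks A 0 0 K)) {ν : Type*} [Fintype ν] [DecidableEq ν]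
    (H' : Matrix ν ν (ZMod q)) : QuasiPairedIso H H' ↔ QuasiPairedIso K H' := by
  rw [← quasiPairedIso_fromBlocks_iff hA hA' K H']
  constructor <;> rintro ⟨k₁, k₂, C₁, C₂, hC₁, hC₁', hC₂, hC₂', hC⟩
  · exact ⟨k₁, k₂, C₁, C₂, hC₁, hC₁', hC₂, hC₂',
      ((CongruentTo.refl C₁).fromBlocks h).symm.trans hC⟩
  · exact ⟨k₁, k₂, C₁, C₂, hC₁, hC₁', hC₂, hC₂', ((CongruentTo.refl C₁).fromBlocks h).trans hC⟩

end QuasiPairedIso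

theorem ZMod.castHom_eq_zero_iff {m n : ℕ} (h : m ∣ n) (x : ZMod n) :
    castHom h (ZMod m) x = 0 ↔ (m : ZMod n) ∣ x := by
  obtain ⟨a, rfl⟩ := ZMod.intCast_surjective x
  rw [map_intCast, ZMod.intCast_zmod_eq_zero_iff_dvd]
  refine ⟨fun ⟨c, hc⟩ => ⟨c, by rw [hc]; push_cast; rfl⟩, fun ⟨y, hy⟩ => ?_⟩
  rw [← ZMod.intCast_zmod_eq_zero_iff_dvd, ← map_intCast (castHom h (ZMod m)), hy, map_mul,
    map_natCast, ZMod.natCast_self, zero_mul]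

theorem Matrix.map_castHom_eq_zero_iff {m n : ℕ} (h : m ∣ n) {ι κ : Type*}
    (M : Matrix ι κ (ZMod n)) :
    M.map (ZMod.castHom h (ZMod m)) = 0 ↔ ∀ i j, (m : ZMod n) ∣ M i j := by
  simp_rw [← Matrix.ext_iff, map_apply, zero_apply, ZMod.castHom_eq_zero_iff]

theorem ZMod.isLocalHom_castHom_pow {p e : ℕ} (hp : p.Prime) (he : e ≠ 0) :
    IsLocalHom (castHom (dvd_pow_self p he) (ZMod p)) := by
  have : NeZero (p ^ e) := ⟨pow_ne_zero e hp.ne_zero⟩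
  have : Fact p.Prime := ⟨hp⟩
  refine ⟨fun x hx => ?_⟩
  rw [← ZMod.natCast_zmod_val x, ZMod.isUnit_natCast_iff_not_dvd_pow hp (Nat.pos_of_ne_zero he)]
  intro hdvd
  rw [← ZMod.natCast_zmod_val x, map_natCast, (ZMod.natCast_eq_zero_iff _ _).mpr hdvd] at hx
  exact not_isUnit_zero hx

theorem Nat.card_subtype_and_div_card_eq {K : Type*} [Semifield K] [CharZero K]
    {α β γ : Type*} {S P : α → Prop} {T Q : γ → Prop} [Finite {a // S a}] [Nonempty {a // S a}]
    (e : {a // S a} ≃ β × {c // T c}) (h : ∀ a : {a // S a}, P a ↔ Q (e a).2) :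
    (Nat.card {a // S a ∧ P a} : K) / Nat.card {a // S a} =
      Nat.card {c // T c ∧ Q c} / Nat.card {c // T c} := by
  have hP : Nat.card {a // S a ∧ P a} = Nat.card β * Nat.card {c // T c ∧ Q c} := by
    rw [← Nat.card_prod]
    refine Nat.card_congr <| (Equiv.subtypeSubtypeEquivSubtypeInter S P).symm.trans <|
      (e.subtypeEquiv (q := fun y => Q y.2) h).trans ?_
    exact ⟨fun y => (y.1.1, ⟨y.1.2, y.1.2.2, y.2⟩), fun z => ⟨(z.1, ⟨z.2, z.2.2.1⟩), z.2.2.2⟩,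
      fun _ => rfl, fun _ => rfl⟩
  have hβ : Nat.card β ≠ 0 :=
    left_ne_zero_of_mul (by rw [← Nat.card_prod, ← Nat.card_congr e]; exact Nat.card_pos.ne')
  rw [hP, Nat.card_congr e, Nat.card_prod, Nat.cast_mul, Nat.cast_mul,
    mul_div_mul_left _ _ (Nat.cast_ne_zero.mpr hβ)]

theorem Matrix.IsSymm.mul_mul_transpose {α m n : Type*} [Fintype n] [CommSemiring α]
    {M : Matrix n n α} (hM : M.IsSymm) (A : Matrix m n α) : (A * M * Aᵀ).IsSymm := by
  rw [IsSymm, transpose_mul, transpose_mul, transpose_transpose, hM, Matrix.mul_assoc]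

theorem Matrix.IsSymm.exists_rank_normal_form {F : Type*} [Field F] {m : Type*} [Fintype m]
    [DecidableEq m] {M : Matrix m m F} (hM : M.IsSymm) :
    ∃ (W : Matrix m m F) (σ : m ≃ Fin M.rank ⊕ Fin (Fintype.card m - M.rank))
      (A : Matrix (Fin M.rank) (Fin M.rank) F), IsUnit W ∧ IsUnit A.det ∧
      (W * M * Wᵀ).submatrix σ.symm σ.symm = Matrix.fromBlocks A 0 0 0 := by
  obtain ⟨V, U, σ, hV, hU, hVMU⟩ := M.exists_rank_normal_form
  have hV' : IsUnit V.det := (isUnit_iff_isUnit_det V).mp hV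
  set T := (Uᵀ * V⁻¹).submatrix σ.symm σ.symm
  have hT : IsUnit T.det := by
    simp [T, ((isUnit_iff_isUnit_det U).mp hU).ne_zero, hV'.ne_zero]
  have hS : (Uᵀ * M * Uᵀᵀ).submatrix σ.symm σ.symm = T * Matrix.fromBlocks 1 0 0 0 := by
    rw [transpose_transpose, show Uᵀ * M * U = Uᵀ * V⁻¹ * (V * M * U) by
      simp [Matrix.mul_assoc, ← Matrix.mul_assoc V⁻¹, nonsing_inv_mul V hV'], hVMU]
    rw [← submatrix_mul_equiv _ _ _ σ.symm, submatrix_submatrix]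
    simp [T]
  have hTS : T * Matrix.fromBlocks 1 0 0 0 = Matrix.fromBlocks T.toBlocks₁₁ 0 T.toBlocks₂₁ 0 := by
    conv_lhs => rw [← fromBlocks_toBlocks T]
    simp [fromBlocks_multiply]
  have hsymm : (Matrix.fromBlocks T.toBlocks₁₁ 0 T.toBlocks₂₁ 0).IsSymm := by
    rw [← hTS, ← hS]
    exact (hM.mul_mul_transpose _).submatrix _
  obtain ⟨-, h₂₁, -⟩ := isSymm_fromBlocks_iff.mp hsymm
  rw [transpose_zero] at h₂₁
  refine ⟨Uᵀ, σ, T.toBlocks₁₁, (isUnit_transpose U).mpr hU, ?_, by rw [hS, hTS, ← h₂₁]⟩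
  rw [← fromBlocks_toBlocks T, ← h₂₁, det_fromBlocks_zero₂₁] at hT
  exact isUnit_of_mul_isUnit_left hT

namespace Matrix

variable {R F : Type*} [CommRing R] [CommRing F] (π : R →+* F) {ι κ ν : Type*}

abbrev SymmLift (B : Matrix ι ι F) : Type _ := {H : Matrix ι ι R // H.IsSymm ∧ H.map π = B}

namespace SymmLift

theorem nonempty (hπ : Function.Surjective π) {B : Matrix ι ι F} (hB : B.IsSymm) :
    Nonempty (SymmLift π B) :=
  ⟨⟨B.map (Function.surjInv hπ), hB.map _, by ext i j; exact Function.surjInv_eq hπ _⟩⟩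

def addEquiv {B : Matrix ι ι F} {S : Matrix ι ι R} (hS : S.IsSymm) (hπS : S.map π = 0) :
    SymmLift π B ≃ SymmLift π B :=
  (Equiv.addRight S).subtypeEquiv fun H => by
    refine and_congr ?_ ?_
    · rw [IsSymm, IsSymm, Equiv.coe_addRight, transpose_add, hS, add_left_inj]
    · rw [Equiv.coe_addRight, Matrix.map_add _ (map_add π), hπS, add_zero]

def blocksEquiv (B₁ : Matrix κ κ F) :
    SymmLift π (fromBlocks B₁ 0 0 (0 : Matrix ν ν F)) ≃
      (SymmLift π B₁ × {C : Matrix κ ν R // C.map π = 0}) × SymmLift π (0 : Matrix ν ν F) where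
  toFun G := ((⟨G.1.toBlocks₁₁, congrArg toBlocks₁₁ G.2.1, congrArg toBlocks₁₁ G.2.2⟩,
      ⟨G.1.toBlocks₁₂, congrArg toBlocks₁₂ G.2.2⟩),
    ⟨G.1.toBlocks₂₂, congrArg toBlocks₂₂ G.2.1, congrArg toBlocks₂₂ G.2.2⟩)
  invFun X := ⟨fromBlocks X.1.1.1 X.1.2.1 X.1.2.1ᵀ X.2.1, X.1.1.2.1.fromBlocks rfl X.2.2.1, by
    rw [fromBlocks_map, X.1.1.2.2, transpose_map, X.1.2.2, X.2.2.2, transpose_zero]⟩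
  left_inv G := by
    have h₂₁ : G.1.toBlocks₁₂ᵀ = G.1.toBlocks₂₁ := congrArg toBlocks₂₁ G.2.1
    ext1
    simp only [h₂₁, fromBlocks_toBlocks]
  right_inv X := rfl

end SymmLift

variable [Fintype ι] [DecidableEq ι] [Fintype κ] [DecidableEq κ] [Fintype ν] [DecidableEq ν]

theorem congruent_fromBlocks_schur {A : Matrix κ κ R} (hA : A.IsSymm) (hA' : IsUnit A.det)
    (C : Matrix κ ν R) (D : Matrix ν ν R) :
    (fromBlocks A 0 0 (D - Cᵀ * A⁻¹ * C)).Congruent (fromBlocks A C Cᵀ D) := by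
  let := invertibleOfIsUnitDet A hA'
  have hL : IsUnit (fromBlocks 1 0 (Cᵀ * A⁻¹) 1 : Matrix (κ ⊕ ν) (κ ⊕ ν) R) := by
    simp [isUnit_iff_isUnit_det]
  refine ⟨hL.unit, ?_⟩
  rw [hL.unit_spec, fromBlocks_eq_of_invertible₁₁ A C Cᵀ D, invOf_eq_nonsing_inv,
    fromBlocks_transpose, transpose_mul, transpose_nonsing_inv, hA]
  simp

theorem isUnit_det_of_isUnit_det_map [IsLocalHom π] {A : Matrix ι ι R}
    (h : IsUnit (A.map π).det) : IsUnit A.det :=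
  IsUnit.of_map π _ (by rwa [RingHom.map_det])

theorem exists_units_map_eq [IsLocalHom π] (hπ : Function.Surjective π) {W : Matrix ι ι F}
    (hW : IsUnit W) : ∃ U : (Matrix ι ι R)ˣ, (U : Matrix ι ι R).map π = W := by
  have hmap : (W.map (Function.surjInv hπ)).map π = W := by
    ext i j
    exact Function.surjInv_eq hπ _
  have hU : IsUnit (W.map (Function.surjInv hπ)) := by
    rw [isUnit_iff_isUnit_det]
    exact isUnit_det_of_isUnit_det_map π (by rwa [hmap, ← isUnit_iff_isUnit_det])
  exact ⟨hU.unit, hmap⟩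

namespace SymmLift

theorem isUnit_det [IsLocalHom π] {B : Matrix ι ι F} (hB : IsUnit B.det) (A : SymmLift π B) :
    IsUnit A.1.det :=
  isUnit_det_of_isUnit_det_map π (by rwa [A.2.2])

def reindexCongruenceEquiv (U : (Matrix ι ι R)ˣ) (σ : ι ≃ κ) {B : Matrix ι ι F}
    {B' : Matrix κ κ F}
    (h : ((U : Matrix ι ι R).map π * B * ((U : Matrix ι ι R).map π)ᵀ).submatrix σ.symm σ.symm
      = B') :
    SymmLift π B ≃ SymmLift π B' :=
  ((Matrix.congruenceEquiv U).trans (reindex σ σ)).subtypeEquiv fun H => by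
    refine and_congr ?_ ?_
    · rw [IsSymm, IsSymm, Equiv.trans_apply, transpose_reindex, congruenceEquiv_transpose,
        (reindex σ σ).apply_eq_iff_eq, (Matrix.congruenceEquiv U).apply_eq_iff_eq]
    · rw [← h, Equiv.trans_apply, reindex_apply, congruenceEquiv_apply, ← submatrix_map,
        Matrix.map_mul, Matrix.map_mul, transpose_map]
      let Ū : (Matrix ι ι F)ˣ := Units.map π.mapMatrix.toMonoidHom U
      exact (((Matrix.congruenceEquiv Ū).trans (reindex σ σ)).apply_eq_iff_eq).symm

theorem congruentTo_reindexCongruenceEquiv (U : (Matrix ι ι R)ˣ) (σ : ι ≃ κ) {B : Matrix ι ι F}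
    {B' : Matrix κ κ F}
    (h : ((U : Matrix ι ι R).map π * B * ((U : Matrix ι ι R).map π)ᵀ).submatrix σ.symm σ.symm
      = B') (H : SymmLift π B) : H.1.CongruentTo (reindexCongruenceEquiv π U σ h H).1 :=
  (Congruent.congruentTo ⟨U, rfl⟩).trans (.of_submatrix_eq σ rfl)

/-- `[[A, C], [Cᵀ, D]] ↦ ((A, C), D - Cᵀ A⁻¹ C)` -/
noncomputable def schurEquiv (B₁ : Matrix κ κ F) :
    SymmLift π (fromBlocks B₁ 0 0 (0 : Matrix ν ν F)) ≃
      (SymmLift π B₁ × {C : Matrix κ ν R // C.map π = 0}) × SymmLift π (0 : Matrix ν ν F) :=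
  (blocksEquiv π B₁).trans <| (Equiv.refl _).prodShear fun X =>
    addEquiv π (S := -(X.2.1ᵀ * X.1.1⁻¹ * X.2.1))
      (by simpa using (X.1.2.1.inv.mul_mul_transpose X.2.1ᵀ).neg)
      (by rw [Matrix.map_neg _ (map_neg π), Matrix.map_mul, X.2.2, Matrix.mul_zero, neg_zero])

theorem congruentTo_schurEquiv [IsLocalHom π] {B₁ : Matrix κ κ F} (hB₁ : IsUnit B₁.det)
    (G : SymmLift π (fromBlocks B₁ 0 0 (0 : Matrix ν ν F))) :
    G.1.CongruentTo (fromBlocks (schurEquiv π B₁ G).1.1.1 0 0 (schurEquiv π B₁ G).2.1) := by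
  have hG : fromBlocks G.1.toBlocks₁₁ G.1.toBlocks₁₂ G.1.toBlocks₁₂ᵀ G.1.toBlocks₂₂ = G.1 :=
    congrArg Subtype.val ((blocksEquiv π B₁).symm_apply_apply G)
  have hA : G.1.toBlocks₁₁.IsSymm := congrArg toBlocks₁₁ G.2.1
  have hA' : IsUnit G.1.toBlocks₁₁.det := isUnit_det π hB₁ (blocksEquiv π B₁ G).1.1
  have := (congruent_fromBlocks_schur hA hA' G.1.toBlocks₁₂ G.1.toBlocks₂₂).congruentTo.symm
  rw [sub_eq_add_neg, hG] at this
  exact this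

end SymmLift

end Matrix

theorem stmt_18_general {p : ℕ} (hp : p.Prime) {e : ℕ} (he : 1 ≤ e) {n k : ℕ} (hk : k ≤ n)
    (B : Matrix (Fin n) (Fin n) (ZMod p)) (hBs : B.IsSymm) (hBr : B.rank = n - k)
    (m : ℕ) (H' : Matrix (Fin m) (Fin m) (ZMod (p ^ e))) :
    (Nat.card {H : Matrix (Fin n) (Fin n) (ZMod (p ^ e)) //
        H.IsSymm ∧
        H.map (ZMod.castHom (dvd_pow_self p (Nat.one_le_iff_ne_zero.mp he)) (ZMod p)) = B ∧
        QuasiPairedIso H H'} : ℚ) /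
      (Nat.card {H : Matrix (Fin n) (Fin n) (ZMod (p ^ e)) //
        H.IsSymm ∧
        H.map (ZMod.castHom (dvd_pow_self p (Nat.one_le_iff_ne_zero.mp he)) (ZMod p)) = B} : ℚ) =
    (Nat.card {H : Matrix (Fin k) (Fin k) (ZMod (p ^ e)) //
        H.IsSymm ∧ (∀ i j, (p : ZMod (p ^ e)) ∣ H i j) ∧ QuasiPairedIso H H'} : ℚ) /
      (Nat.card {H : Matrix (Fin k) (Fin k) (ZMod (p ^ e)) //
        H.IsSymm ∧ ∀ i j, (p : ZMod (p ^ e)) ∣ H i j} : ℚ) := by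
  have : Fact p.Prime := ⟨hp⟩
  have : NeZero (p ^ e) := ⟨pow_ne_zero e hp.ne_zero⟩
  have hdvd := dvd_pow_self p (Nat.one_le_iff_ne_zero.mp he)
  let π := ZMod.castHom hdvd (ZMod p)
  have : IsLocalHom π := ZMod.isLocalHom_castHom_pow hp (Nat.one_le_iff_ne_zero.mp he)
  obtain ⟨W, σ, B₁, hW, hB₁, hWB⟩ := hBs.exists_rank_normal_form
  obtain rfl : Fintype.card (Fin n) - B.rank = k := by rw [Fintype.card_fin, hBr]; omega
  obtain ⟨U, rfl⟩ := exists_units_map_eq π (ZMod.castHom_surjective hdvd) hW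
  have := SymmLift.nonempty π (ZMod.castHom_surjective hdvd) hBs
  simp only [← and_assoc, ← map_castHom_eq_zero_iff hdvd]
  let E := (SymmLift.reindexCongruenceEquiv π U σ hWB).trans (SymmLift.schurEquiv π B₁)
  exact Nat.card_subtype_and_div_card_eq E fun H =>
    quasiPairedIso_iff_of_congruentTo_fromBlocks (E H).1.1.2.1 (SymmLift.isUnit_det π hB₁ _)
      ((SymmLift.congruentTo_reindexCongruenceEquiv π U σ hWB H).trans
        (SymmLift.congruentTo_schurEquiv π hB₁ _)) H'

/-- Let `p` be prime, `e ≥ 1`, `0 ≤ k ≤ n`, and let `B ∈ Sym_n(𝔽_p)` have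
corank `k` (i.e. rank `n - k`). Then for every symmetric `H' ∈ Sym_m(ℤ/p^eℤ)`, the proportion,
among symmetric `H ∈ Sym_n(ℤ/p^eℤ)` reducing to `B` mod `p`, of those with
`Cok_*(H) ≃ Cok_*(H')` equals the proportion, among symmetric `H_k ∈ Sym_k(ℤ/p^eℤ)` with all
entries in `pℤ/p^eℤ`, of those with `Cok_*(H_k) ≃ Cok_*(H')`. -/
theorem stmt_18 {p : ℕ} (hp : p.Prime) {e : ℕ} (he : 1 ≤ e) {n k : ℕ} (hk : k ≤ n)
    (B : Matrix (Fin n) (Fin n) (ZMod p)) (hBs : B.IsSymm) (hBr : B.rank = n - k)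
    (m : ℕ) (H' : Matrix (Fin m) (Fin m) (ZMod (p ^ e))) (hH' : H'.IsSymm) :
    (Nat.card {H : Matrix (Fin n) (Fin n) (ZMod (p ^ e)) //
        H.IsSymm ∧
        H.map (ZMod.castHom (dvd_pow_self p (Nat.one_le_iff_ne_zero.mp he)) (ZMod p)) = B ∧
        QuasiPairedIso H H'} : ℚ) /
      (Nat.card {H : Matrix (Fin n) (Fin n) (ZMod (p ^ e)) //
        H.IsSymm ∧
        H.map (ZMod.castHom (dvd_pow_self p (Nat.one_le_iff_ne_zero.mp he)) (ZMod p)) = B} : ℚ) =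
    (Nat.card {H : Matrix (Fin k) (Fin k) (ZMod (p ^ e)) //
        H.IsSymm ∧ (∀ i j, (p : ZMod (p ^ e)) ∣ H i j) ∧ QuasiPairedIso H H'} : ℚ) /
      (Nat.card {H : Matrix (Fin k) (Fin k) (ZMod (p ^ e)) //
        H.IsSymm ∧ ∀ i j, (p : ZMod (p ^ e)) ∣ H i j} : ℚ) :=
  stmt_18_general hp he hk B hBs hBr m H'
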